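/- arXiv:2308.05289 — 2 statements merged into one kernel-verified Lean document; each statement's English description precedes it below -/
import Mathlib

section
/- Complex-step derivative approximation: if f : ℂ → ℂ is complex differentiable at a real point x and maps reals to reals in a neighborhood of x, then Im[f(x + ih)]/h → f'(x) as h → 0 along real h ≠ 0. -/
/-!
Along the vertical line `h ↦ x + h I` the chain rule gives the derivative `I f'(x)`, whose
imaginary part is `Re f'(x)`. As `f` is real on the real axis near `x`, both `f x` and `f'(x)` are
real, so `Im f(x + h I) / h` is the difference quotient of that imaginary part and tends to `f'(x)`.
-/

open Complex Filter Topology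

theorem HasDerivAt.hasDerivAt_im_comp_add_mul_I {f : ℂ → ℂ} {L z : ℂ} (hf : HasDerivAt f L z) :
    HasDerivAt (fun h : ℝ => (f (z + h * I)).im) L.re 0 := by
  have hline : HasDerivAt (fun h : ℝ => z + h * I) I 0 := by
    simpa using ((hasDerivAt_id (0 : ℝ)).ofReal_comp.mul_const I).const_add z
  have hcomp : HasDerivAt (fun h : ℝ => f (z + h * I)) (I • L) 0 :=
    HasDerivAt.scomp (0 : ℝ) (by simpa using hf) hline
  have him := imCLM.hasFDerivAt.comp_hasDerivAt (0 : ℝ) hcomp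
  rwa [imCLM_apply, smul_eq_mul, I_mul_im] at him

theorem HasDerivAt.im_eq_zero_of_eventually_im_eq_zero {f : ℂ → ℂ} {L : ℂ} {x : ℝ}
    (hf : HasDerivAt f L x) (hreal : ∀ᶠ t : ℝ in 𝓝 x, (f t).im = 0) : L.im = 0 := by
  have him : HasDerivAt (fun t : ℝ => (f t).im) L.im x :=
    imCLM.hasFDerivAt.comp_hasDerivAt x hf.comp_ofReal
  exact him.unique <| (hasDerivAt_const x (0 : ℝ)).congr_of_eventuallyEq hreal

theorem HasDerivAt.tendsto_im_comp_add_mul_I_div {f : ℂ → ℂ} {L z : ℂ} (hf : HasDerivAt f L z)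
    (hz : (f z).im = 0) :
    Tendsto (fun h : ℝ => (f (z + h * I)).im / h) (𝓝[≠] 0) (𝓝 L.re) := by
  refine (hasDerivAt_iff_tendsto_slope.mp hf.hasDerivAt_im_comp_add_mul_I).congr fun h => ?_
  simp [slope, hz, div_eq_inv_mul]

theorem complex_step_derivative (f : ℂ → ℂ) (x : ℝ)
    (hf : DifferentiableAt ℂ f (x : ℂ))
    (hreal : ∀ᶠ t : ℝ in nhds x, (f (t : ℂ)).im = 0) :
    Filter.Tendsto (fun h : ℝ => (((f ((x : ℂ) + h * Complex.I)).im / h : ℝ) : ℂ))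
      (nhdsWithin 0 {0}ᶜ) (nhds (deriv f (x : ℂ))) := by
  have hD := hf.hasDerivAt
  have hderiv_real : ((deriv f x).re : ℂ) = deriv f x :=
    ext rfl (by simp [hD.im_eq_zero_of_eventually_im_eq_zero hreal])
  rw [← hderiv_real]
  exact continuous_ofReal.continuousAt.tendsto.comp
    (hD.tendsto_im_comp_add_mul_I_div hreal.self_of_nhds)
end

section
/- Second-order accuracy of the complex step: if f is holomorphic near a real point x and real-valued on the reals near x, then Im[f(x+ih)]/h = f'(x) + O(h²) as real h → 0; specifically |Im[f(x+ih)]/h − f'(x)| ≤ C h² for some constant C depending on a bound for f''' near x. -/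
/-!
Restrict `f` to the vertical segment `t ↦ x + t * (h * I)`, `t ∈ [0, 1]`, and apply Taylor's
theorem of order two: `f (x + h I) = f x + h I f' x - h² f'' x / 2 + R` with `‖R‖ ≤ M |h|³ / 2`.
A holomorphic function that is real on the real axis has all its derivatives real there, so
`f x` and `h² f'' x / 2` are real and the imaginary part of the Taylor polynomial is exactly
`h * f' x`; dividing by `h` leaves an error of at most `M h² / 2`.
-/

open Metric Set Nat

lemma DifferentiableOn.hasDerivAt_iteratedDeriv {E : Type*} [NormedAddCommGroup E]
    [NormedSpace ℂ E] [CompleteSpace E] {f : ℂ → E} {U : Set ℂ}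
    (hf : DifferentiableOn ℂ f U) (hU : IsOpen U) (k : ℕ) {z : ℂ} (hz : z ∈ U) :
    HasDerivAt (iteratedDeriv k f) (iteratedDeriv (k + 1) f z) z := by
  rw [iteratedDeriv_succ, iteratedDeriv_eq_iterate]
  exact ((hf.analyticOnNhd hU).iterated_deriv k z hz).differentiableAt.hasDerivAt

lemma HasDerivAt.comp_ofReal_line {g : ℂ → ℂ} {g' z c : ℂ} {t : ℝ}
    (hg : HasDerivAt g g' (z + t * c)) :
    HasDerivAt (fun s : ℝ => g (z + s * c)) (c * g') t := by
  have hline : HasDerivAt (fun w : ℂ => z + w * c) c t := by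
    simpa using ((hasDerivAt_id (t : ℂ)).mul_const c).const_add z
  simpa [mul_comm] using (hg.comp (t : ℂ) hline).comp_ofReal

lemma HasDerivAt.im_comp_ofReal {g : ℂ → ℂ} {g' : ℂ} {t : ℝ} (hg : HasDerivAt g g' t) :
    HasDerivAt (fun s : ℝ => (g s).im) g'.im t :=
  Complex.imCLM.hasFDerivAt.comp_hasDerivAt t hg.comp_ofReal

lemma DifferentiableOn.im_iteratedDeriv_ofReal_eq_zero {f : ℂ → ℂ} {U : Set ℂ}
    (hf : DifferentiableOn ℂ f U) (hU : IsOpen U)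
    (hreal : ∀ t : ℝ, (t : ℂ) ∈ U → (f t).im = 0) (k : ℕ) {t : ℝ} (ht : (t : ℂ) ∈ U) :
    (iteratedDeriv k f t).im = 0 := by
  induction k generalizing t with
  | zero => simpa using hreal t ht
  | succ k ih =>
    have hzero : (fun s : ℝ => (iteratedDeriv k f s).im) =ᶠ[nhds t] fun _ => 0 :=
      Filter.eventually_of_mem ((hU.preimage Complex.continuous_ofReal).mem_nhds ht)
        fun s hs => ih hs
    exact (hf.hasDerivAt_iteratedDeriv hU k ht).im_comp_ofReal.unique
      ((hasDerivAt_const t 0).congr_of_eventuallyEq hzero)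

lemma DifferentiableOn.iteratedDerivWithin_comp_line {f : ℂ → ℂ} {U : Set ℂ}
    (hf : DifferentiableOn ℂ f U) (hU : IsOpen U) {s : Set ℝ} (hs : UniqueDiffOn ℝ s)
    {z c : ℂ} (hmaps : MapsTo (fun t : ℝ => z + t * c) s U) (k : ℕ) {t : ℝ} (ht : t ∈ s) :
    iteratedDerivWithin k (fun t : ℝ => f (z + t * c)) s t =
      c ^ k * iteratedDeriv k f (z + t * c) := by
  induction k generalizing t with
  | zero => simp
  | succ k ih =>
    have hderiv := ((hf.hasDerivAt_iteratedDeriv hU k (hmaps ht)).comp_ofReal_line.const_mul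
      (c ^ k)).hasDerivWithinAt (s := s)
    rw [iteratedDerivWithin_succ, derivWithin_congr (fun _ hs => ih hs) (ih ht),
      hderiv.derivWithin (hs t ht), pow_succ, mul_assoc]

lemma mapsTo_line_Icc_ball {z c : ℂ} {r : ℝ} (hc : z + c ∈ ball z r) :
    MapsTo (fun t : ℝ => z + t * c) (Icc 0 1) (ball z r) := by
  intro t ht
  rw [mem_ball_iff_norm] at hc ⊢
  simp only [add_sub_cancel_left, norm_mul, Complex.norm_real, Real.norm_eq_abs] at hc ⊢
  calc |t| * ‖c‖ ≤ 1 * ‖c‖ := by gcongr; exact abs_le.mpr ⟨by linarith [ht.1], ht.2⟩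
    _ < r := by rwa [one_mul]

theorem DifferentiableOn.norm_sub_taylor_le {f : ℂ → ℂ} {z c : ℂ} {r M : ℝ}
    (hf : DifferentiableOn ℂ f (ball z r)) (n : ℕ)
    (hM : ∀ w ∈ ball z r, ‖iteratedDeriv (n + 1) f w‖ ≤ M) (hc : z + c ∈ ball z r) :
    ‖f (z + c) - ∑ k ∈ Finset.range (n + 1), c ^ k / k ! * iteratedDeriv k f z‖ ≤
      M * ‖c‖ ^ (n + 1) / n ! := by
  have hmaps := mapsTo_line_Icc_ball hc
  have hderiv := hf.iteratedDerivWithin_comp_line isOpen_ball (uniqueDiffOn_Icc one_pos) hmaps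
  have hsmooth : ContDiffOn ℝ (n + 1) (fun t : ℝ => f (z + t * c)) (Icc 0 1) :=
    ((hf.contDiffOn isOpen_ball).restrict_scalars ℝ).comp
      (contDiff_const.add (Complex.ofRealCLM.contDiff.mul contDiff_const)).contDiffOn hmaps
  have hbound : ∀ t ∈ Icc (0 : ℝ) 1, ‖iteratedDerivWithin (n + 1)
      (fun t : ℝ => f (z + t * c)) (Icc 0 1) t‖ ≤ ‖c‖ ^ (n + 1) * M := fun t ht => by
    rw [hderiv _ ht, norm_mul, norm_pow]
    exact mul_le_mul_of_nonneg_left (hM _ (hmaps ht)) (by positivity)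
  have htaylor := taylor_mean_remainder_bound zero_le_one hsmooth (right_mem_Icc.mpr zero_le_one)
    hbound
  have hpoly : taylorWithinEval (fun t : ℝ => f (z + t * c)) n (Icc 0 1) 0 1 =
      ∑ k ∈ Finset.range (n + 1), c ^ k / k ! * iteratedDeriv k f z := by
    rw [taylor_within_apply]
    refine Finset.sum_congr rfl fun k _ => ?_
    rw [hderiv k (left_mem_Icc.mpr zero_le_one), Complex.real_smul, Complex.ofReal_zero,
      zero_mul, add_zero]
    push_cast
    ring
  rw [hpoly] at htaylor
  simpa [mul_comm] using htaylor

theorem complex_step_second_order_general (f : ℂ → ℂ) (x : ℝ) (r M : ℝ)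
    (hf : DifferentiableOn ℂ f (Metric.ball (x : ℂ) r))
    (hreal : ∀ t : ℝ, (t : ℂ) ∈ Metric.ball (x : ℂ) r → (f (t : ℂ)).im = 0)
    (hM : ∀ z ∈ Metric.ball (x : ℂ) r, ‖iteratedDeriv 3 f z‖ ≤ M) :
    ∃ C : ℝ, ∀ h : ℝ, h ≠ 0 → ((x : ℂ) + h * Complex.I) ∈ Metric.ball (x : ℂ) r →
      |(f ((x : ℂ) + h * Complex.I)).im / h - (deriv f (x : ℂ)).re| ≤ C * h ^ 2 := by
  refine ⟨M / 2, fun h hh hball => ?_⟩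
  have hx : (x : ℂ) ∈ ball (x : ℂ) r := by
    simpa using mapsTo_line_Icc_ball hball (left_mem_Icc.mpr zero_le_one)
  have him (k : ℕ) := hf.im_iteratedDeriv_ofReal_eq_zero isOpen_ball hreal k hx
  set T := ∑ k ∈ Finset.range 3, ((h : ℂ) * Complex.I) ^ k / k ! * iteratedDeriv k f x
  have hT : T.im = h * (deriv f x).re := by
    have hf0 : (f x).im = 0 := by simpa using him 0
    simp [T, Finset.sum_range_succ, mul_pow, ← Complex.ofReal_pow, hf0, him 2]
  have htaylor : ‖f (x + h * Complex.I) - T‖ ≤ M * |h| ^ 3 / 2 := by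
    simpa using hf.norm_sub_taylor_le 2 hM hball
  calc |(f (x + h * Complex.I)).im / h - (deriv f x).re|
      = |(f (x + h * Complex.I) - T).im| / |h| := by
        rw [Complex.sub_im, hT, ← abs_div]; field_simp
    _ ≤ ‖f (x + h * Complex.I) - T‖ / |h| := by gcongr; exact Complex.abs_im_le_norm _
    _ ≤ M * |h| ^ 3 / 2 / |h| := by gcongr
    _ = M / 2 * h ^ 2 := by
        rw [pow_succ, sq_abs]; field_simp

theorem complex_step_second_order (f : ℂ → ℂ) (x : ℝ) (r M : ℝ) (hr : 0 < r)
    (hf : DifferentiableOn ℂ f (Metric.ball (x : ℂ) r))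
    (hreal : ∀ t : ℝ, (t : ℂ) ∈ Metric.ball (x : ℂ) r → (f (t : ℂ)).im = 0)
    (hM : ∀ z ∈ Metric.ball (x : ℂ) r, ‖iteratedDeriv 3 f z‖ ≤ M) :
    ∃ C : ℝ, ∀ h : ℝ, h ≠ 0 → ((x : ℂ) + h * Complex.I) ∈ Metric.ball (x : ℂ) r →
      |(f ((x : ℂ) + h * Complex.I)).im / h - (deriv f (x : ℂ)).re| ≤ C * h ^ 2 :=
  complex_step_second_order_general f x r M hf hreal hM
end
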